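/- arXiv:2512.20433 — 4 statements merged into one kernel-verified Lean document; each statement's English description precedes it below -/
import Mathlib

section
/- Under Assumption A and for every γ ∈ (0, min{γ_g, 1/(L_f + L_h)}), the infimum over x ∈ ℝ^d of φ(x) = f(x) + g(x) + h(x) equals the infimum over x ∈ ℝ^d of the Davis–Yin envelope φ_γ^DY(x) (equality of infima in ℝ ∪ {±∞}). -/
/-!
By the descent lemma, `f + h` lies below its linearization at `x` plus
`(L_f + L_h) / 2 * ‖y - x‖ ^ 2`, and this quadratic term is at most `1 / (2γ) * ‖y - x‖ ^ 2`
once `γ (L_f + L_h) ≤ 1`. Hence `φ y` is below every term of the infimum defining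
`φ_γ^DY x`, so `inf φ ≤ φ_γ^DY x`. Conversely the choice `y = x` gives `φ_γ^DY x ≤ φ x`.
-/

open scoped RealInnerProductSpace

/-- The Davis–Yin envelope `φ_γ^DY`. -/
noncomputable def dyEnv {E : Type*} [NormedAddCommGroup E] [InnerProductSpace ℝ E]
    [CompleteSpace E] (f h : E → ℝ) (g : E → EReal) (γ : ℝ) (x : E) : EReal :=
  ⨅ y : E, (((f x + ⟪gradient f x, y - x⟫ + h x + ⟪gradient h x, y - x⟫
      + 1 / (2 * γ) * ‖y - x‖ ^ 2 : ℝ) : EReal) + g y)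

section
variable {E : Type*} [NormedAddCommGroup E] [InnerProductSpace ℝ E] [CompleteSpace E]

theorem descent_lemma {f : E → ℝ} {L : ℝ} (hfd : Differentiable ℝ f)
    (hlip : ∀ a b, ‖gradient f a - gradient f b‖ ≤ L * ‖a - b‖) (x y : E) :
    f y ≤ f x + ⟪gradient f x, y - x⟫ + L / 2 * ‖y - x‖ ^ 2 := by
  set v := y - x
  set φ : ℝ → ℝ := fun t => f (x + t • v) - t * ⟪gradient f x, v⟫ - L / 2 * t ^ 2 * ‖v‖ ^ 2
  have hφ (t : ℝ) :
      HasDerivAt φ (⟪gradient f (x + t • v), v⟫ - ⟪gradient f x, v⟫ - L * t * ‖v‖ ^ 2) t := by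
    have hline : HasDerivAt (fun t : ℝ => x + t • v) v t := by
      simpa using ((hasDerivAt_id t).smul_const v).const_add x
    have hf : HasDerivAt (fun t : ℝ => f (x + t • v)) ⟪gradient f (x + t • v), v⟫ t := by
      rw [inner_gradient_left]
      exact (hfd _).hasFDerivAt.comp_hasDerivAt t hline
    refine ((hf.sub ((hasDerivAt_id t).mul_const _)).sub
      (((hasDerivAt_pow 2 t).const_mul (L / 2)).mul_const (‖v‖ ^ 2))).congr_deriv ?_
    push_cast
    ring
  have hslope (t : ℝ) (ht : 0 ≤ t) :
      ⟪gradient f (x + t • v), v⟫ - ⟪gradient f x, v⟫ ≤ L * t * ‖v‖ ^ 2 :=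
    calc ⟪gradient f (x + t • v), v⟫ - ⟪gradient f x, v⟫
        = ⟪gradient f (x + t • v) - gradient f x, v⟫ := (inner_sub_left _ _ _).symm
      _ ≤ ‖gradient f (x + t • v) - gradient f x‖ * ‖v‖ := real_inner_le_norm _ _
      _ ≤ L * ‖x + t • v - x‖ * ‖v‖ := by gcongr; exact hlip _ _
      _ = L * t * ‖v‖ ^ 2 := by
        rw [add_sub_cancel_left, norm_smul, Real.norm_of_nonneg ht]; ring
  have hanti : AntitoneOn φ (Set.Ici 0) :=
    antitoneOn_of_deriv_nonpos (convex_Ici 0) (fun t _ => (hφ t).continuousAt.continuousWithinAt)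
      (fun t _ => (hφ t).differentiableAt.differentiableWithinAt) fun t ht => by
        rw [interior_Ici] at ht
        rw [(hφ t).deriv]
        linarith [hslope t (le_of_lt ht)]
  have := hanti Set.self_mem_Ici (Set.mem_Ici.mpr zero_le_one) zero_le_one
  simp only [φ, v, zero_smul, one_smul, add_zero, add_sub_cancel, zero_mul, sub_zero] at this
  linarith

theorem dyEnv_le (f h : E → ℝ) (g : E → EReal) (γ : ℝ) (x : E) :
    dyEnv f h g γ x ≤ (f x : EReal) + g x + (h x : EReal) := by
  refine iInf_le_of_le x (le_of_eq ?_)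
  simp only [sub_self, inner_zero_right, norm_zero, add_zero, ne_eq, OfNat.ofNat_ne_zero,
    not_false_eq_true, zero_pow, mul_zero, EReal.coe_add]
  abel

theorem iInf_le_dyEnv {f h : E → ℝ} (g : E → EReal) {Lf Lh γ : ℝ} (hfd : Differentiable ℝ f)
    (hflip : ∀ a b : E, ‖gradient f a - gradient f b‖ ≤ Lf * ‖a - b‖)
    (hhd : Differentiable ℝ h)
    (hhlip : ∀ a b : E, ‖gradient h a - gradient h b‖ ≤ Lh * ‖a - b‖)
    (hγ0 : 0 < γ) (hγ : γ * (Lf + Lh) ≤ 1) (x : E) :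
    ⨅ y : E, ((f y : EReal) + g y + (h y : EReal)) ≤ dyEnv f h g γ x := by
  refine le_iInf fun y => iInf_le_of_le y ?_
  have hcoef : (Lf + Lh) / 2 ≤ 1 / (2 * γ) := by
    rw [div_le_div_iff₀ two_pos (by positivity)]
    linarith
  have hmodel : f y + h y ≤ f x + ⟪gradient f x, y - x⟫ + h x + ⟪gradient h x, y - x⟫
      + 1 / (2 * γ) * ‖y - x‖ ^ 2 := by
    linarith [descent_lemma hfd hflip x y, descent_lemma hhd hhlip x y,
      mul_le_mul_of_nonneg_right hcoef (sq_nonneg ‖y - x‖)]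
  calc (f y : EReal) + g y + (h y : EReal) = ((f y + h y : ℝ) : EReal) + g y := by
        rw [EReal.coe_add]; abel
    _ ≤ _ := by gcongr

end

theorem dyEnv_inf_eq_inf_general
    {E : Type*} [NormedAddCommGroup E] [InnerProductSpace ℝ E] [FiniteDimensional ℝ E]
    (f h : E → ℝ) (g : E → EReal) (Lf Lh : ℝ)
    (hfd : Differentiable ℝ f)
    (hflip : ∀ x y : E, ‖gradient f x - gradient f y‖ ≤ Lf * ‖x - y‖)
    (hhd : Differentiable ℝ h)
    (hhlip : ∀ x y : E, ‖gradient h x - gradient h y‖ ≤ Lh * ‖x - y‖)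
    (γ : ℝ) (hγ0 : 0 < γ) (hγ2 : γ * (Lf + Lh) < 1) :
    (⨅ x : E, ((f x : EReal) + g x + (h x : EReal))) = ⨅ x : E, dyEnv f h g γ x :=
  le_antisymm (le_iInf (iInf_le_dyEnv g hfd hflip hhd hhlip hγ0 hγ2.le))
    (iInf_mono (dyEnv_le f h g γ))

theorem dyEnv_inf_eq_inf
    {E : Type*} [NormedAddCommGroup E] [InnerProductSpace ℝ E] [FiniteDimensional ℝ E]
    (f h : E → ℝ) (g : E → EReal) (Lf Lh γg : ℝ)
    (hLf : 0 ≤ Lf) (hLh : 0 ≤ Lh)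
    (hfd : Differentiable ℝ f)
    (hflip : ∀ x y : E, ‖gradient f x - gradient f y‖ ≤ Lf * ‖x - y‖)
    (hhd : Differentiable ℝ h)
    (hhlip : ∀ x y : E, ‖gradient h x - gradient h y‖ ≤ Lh * ‖x - y‖)
    (hγg : 0 < γg)
    (hgtop : ∃ x, g x ≠ ⊤) (hgbot : ∀ x, g x ≠ ⊥)
    (hglsc : LowerSemicontinuous g)
    (hpb : ∀ γ : ℝ, 0 < γ → γ < γg → ∀ w : E,
      ⊥ < ⨅ y : E, (g y + ((1 / (2 * γ) * ‖y - w‖ ^ 2 : ℝ) : EReal)))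
    (hattain : ∃ xs : E, ∀ x : E,
      (f xs : EReal) + g xs + (h xs : EReal) ≤ (f x : EReal) + g x + (h x : EReal))
    (γ : ℝ) (hγ0 : 0 < γ) (hγ1 : γ < γg) (hγ2 : γ * (Lf + Lh) < 1) :
    (⨅ x : E, ((f x : EReal) + g x + (h x : EReal))) = ⨅ x : E, dyEnv f h g γ x :=
  dyEnv_inf_eq_inf_general f h g Lf Lh hfd hflip hhd hhlip γ hγ0 hγ2
end

section
/- Under Assumption A and for every γ ∈ (0, min{γ_g, 1/(L_f + L_h)}), the infimum defining the Davis–Yin envelope φ_γ^DY(x) is a real number for every x ∈ ℝ^d, and the real-valued function x ↦ φ_γ^DY(x) is locally Lipschitz continuous: every point of ℝ^d has a neighborhood on which φ_γ^DY is Lipschitz continuous. -/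
open scoped RealInnerProductSpace

/-!
Completing the square gives
`φ_γ^DY(x) = f x + h x - γ/2 ‖v x‖² + e_γ g (x - γ v x)` with `v = ∇f + ∇h` and `e_γ g` the
Moreau envelope of `g`. Expanding `‖y - w‖²` shows that `e_γ g w - ‖w‖²/(2γ)` is an infimum of
affine functions of `w`, hence concave; it is finite because `g` is proper and prox-bounded, and
a finite concave function on a finite-dimensional space is locally Lipschitz. The other terms
are `C¹` or compositions with the Lipschitz map `v`.
-/

open Set InnerProductSpace

lemma EReal.coe_add_iInf {ι : Sort*} (a : ℝ) (u : ι → EReal) :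
    (a : EReal) + ⨅ i, u i = ⨅ i, ((a : EReal) + u i) :=
  Monotone.map_iInf_of_continuousAt (f := fun z : EReal ↦ (a : EReal) + z)
    ((EReal.continuousAt_add (.inl (EReal.coe_ne_top a)) (.inl (EReal.coe_ne_bot a))).comp
      (continuous_const.prodMk continuous_id).continuousAt)
    (fun _ _ h ↦ add_le_add_right h _) (EReal.coe_add_top a)

lemma contDiff_one_of_continuous_gradient {E : Type*} [NormedAddCommGroup E]
    [InnerProductSpace ℝ E] [CompleteSpace E] {f : E → ℝ} (hf : Differentiable ℝ f)
    (hg : Continuous (gradient f)) : ContDiff ℝ 1 f :=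
  contDiff_one_iff_fderiv.2 ⟨hf, toDual_comp_gradient (f := f) ▸ (toDual ℝ E).continuous.comp hg⟩

noncomputable def moreauEnv {E : Type*} [SeminormedAddCommGroup E] (g : E → EReal) (γ : ℝ)
    (w : E) : EReal :=
  ⨅ y : E, (g y + ((1 / (2 * γ) * ‖y - w‖ ^ 2 : ℝ) : EReal))

lemma moreauEnv_ne_top {E : Type*} [SeminormedAddCommGroup E] {g : E → EReal} {γ : ℝ}
    (hg : ∃ y, g y ≠ ⊤) (w : E) : moreauEnv g γ w ≠ ⊤ := by
  obtain ⟨y, hy⟩ := hg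
  exact ne_top_of_le_ne_top (EReal.add_lt_top hy (EReal.coe_ne_top _)).ne (iInf_le _ y)

section Moreau

variable {E : Type*} [NormedAddCommGroup E] [InnerProductSpace ℝ E] {g : E → EReal} {γ : ℝ}

lemma concaveOn_toReal_moreauEnv_sub_norm_sq
    (hM : ∀ w, moreauEnv g γ w ≠ ⊤ ∧ moreauEnv g γ w ≠ ⊥) :
    ConcaveOn ℝ univ fun w ↦ (moreauEnv g γ w).toReal - 1 / (2 * γ) * ‖w‖ ^ 2 := by
  refine ⟨convex_univ, fun w₁ _ w₂ _ a b ha hb hab ↦ ?_⟩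
  set c := 1 / (2 * γ)
  set w := a • w₁ + b • w₂
  simp only [smul_eq_mul]
  set r := a * (moreauEnv g γ w₁).toReal + b * (moreauEnv g γ w₂).toReal
    - c * (a * ‖w₁‖ ^ 2 + b * ‖w₂‖ ^ 2) + c * ‖w‖ ^ 2
  suffices hr : (r : EReal) ≤ moreauEnv g γ w by
    have := EReal.toReal_le_toReal hr (EReal.coe_ne_bot r) (hM w).1
    rw [EReal.toReal_coe] at this
    linarith
  refine le_iInf fun y ↦ ?_
  have h₁ : moreauEnv g γ w₁ ≤ g y + ((c * ‖y - w₁‖ ^ 2 : ℝ) : EReal) := iInf_le _ y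
  have h₂ : moreauEnv g γ w₂ ≤ g y + ((c * ‖y - w₂‖ ^ 2 : ℝ) : EReal) := iInf_le _ y
  generalize g y = z at h₁ h₂ ⊢
  induction z using EReal.rec with
  | bot => exact absurd (le_bot_iff.1 h₁) (hM w₁).2
  | top => exact le_top.trans_eq (EReal.top_add_coe _).symm
  | coe s =>
    rw [← EReal.coe_add] at h₁ h₂ ⊢
    have h₁' := EReal.toReal_le_toReal h₁ (hM w₁).2 (EReal.coe_ne_top _)
    have h₂' := EReal.toReal_le_toReal h₂ (hM w₂).2 (EReal.coe_ne_top _)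
    rw [EReal.toReal_coe] at h₁' h₂'
    rw [EReal.coe_le_coe_iff]
    have hw : ⟪y, w⟫ = a * ⟪y, w₁⟫ + b * ⟪y, w₂⟫ := by
      simp only [w, inner_add_right, real_inner_smul_right]
    rw [norm_sub_sq_real] at h₁' h₂' ⊢
    obtain rfl : b = 1 - a := by linarith
    rw [hw]
    nlinarith [mul_le_mul_of_nonneg_left h₁' ha, mul_le_mul_of_nonneg_left h₂' hb]

lemma locallyLipschitz_toReal_moreauEnv [FiniteDimensional ℝ E]
    (hM : ∀ w, moreauEnv g γ w ≠ ⊤ ∧ moreauEnv g γ w ≠ ⊥) :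
    LocallyLipschitz fun w ↦ (moreauEnv g γ w).toReal := by
  have hψ := (concaveOn_toReal_moreauEnv_sub_norm_sq hM).locallyLipschitzOn isOpen_univ
  rw [locallyLipschitzOn_univ] at hψ
  have hq : LocallyLipschitz fun w : E ↦ 1 / (2 * γ) * ‖w‖ ^ 2 :=
    (contDiff_const.mul (contDiff_norm_sq ℝ)).locallyLipschitz
  simpa only [sub_add_cancel] using hψ.add hq

end Moreau

lemma inner_add_norm_sq_eq_norm_add_smul_sq {E : Type*} [NormedAddCommGroup E]
    [InnerProductSpace ℝ E] {γ : ℝ} (hγ : γ ≠ 0) (u d : E) :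
    ⟪u, d⟫ + 1 / (2 * γ) * ‖d‖ ^ 2 = 1 / (2 * γ) * ‖d + γ • u‖ ^ 2 - γ / 2 * ‖u‖ ^ 2 := by
  rw [norm_add_sq_real, inner_smul_right, norm_smul, mul_pow, Real.norm_eq_abs, sq_abs,
    real_inner_comm]
  field_simp
  ring

lemma dyEnv_eq_add_moreauEnv {E : Type*} [NormedAddCommGroup E] [InnerProductSpace ℝ E]
    [CompleteSpace E] (f h : E → ℝ) (g : E → EReal) {γ : ℝ} (hγ : γ ≠ 0) (x : E) :
    dyEnv f h g γ x = ((f x + h x - γ / 2 * ‖gradient f x + gradient h x‖ ^ 2 : ℝ) : EReal)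
      + moreauEnv g γ (x - γ • (gradient f x + gradient h x)) := by
  rw [moreauEnv, EReal.coe_add_iInf, dyEnv]
  congr 1 with y
  set v := gradient f x + gradient h x
  have hsq := inner_add_norm_sq_eq_norm_add_smul_sq hγ v (y - x)
  rw [inner_add_left, sub_add] at hsq
  calc _ = (((f x + h x - γ / 2 * ‖v‖ ^ 2) + 1 / (2 * γ) * ‖y - (x - γ • v)‖ ^ 2 : ℝ) : EReal)
        + g y := by congr 2; linarith
    _ = _ := by rw [EReal.coe_add, add_right_comm, add_assoc]

theorem dyEnv_real_and_locallyLipschitz_general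
    {E : Type*} [NormedAddCommGroup E] [InnerProductSpace ℝ E] [FiniteDimensional ℝ E]
    (f h : E → ℝ) (g : E → EReal) (Lf Lh γg : ℝ)
    (hfd : Differentiable ℝ f)
    (hflip : ∀ x y : E, ‖gradient f x - gradient f y‖ ≤ Lf * ‖x - y‖)
    (hhd : Differentiable ℝ h)
    (hhlip : ∀ x y : E, ‖gradient h x - gradient h y‖ ≤ Lh * ‖x - y‖)
    (hgtop : ∃ x, g x ≠ ⊤)
    (hpb : ∀ γ : ℝ, 0 < γ → γ < γg → ∀ w : E,
      ⊥ < ⨅ y : E, (g y + ((1 / (2 * γ) * ‖y - w‖ ^ 2 : ℝ) : EReal)))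
    (γ : ℝ) (hγ0 : 0 < γ) (hγ1 : γ < γg) :
    (∀ x : E, dyEnv f h g γ x ≠ ⊤ ∧ dyEnv f h g γ x ≠ ⊥) ∧
      (∀ x : E, ∃ U ∈ nhds x, ∃ K : ℝ, 0 ≤ K ∧ ∀ a ∈ U, ∀ b ∈ U,
        |(dyEnv f h g γ a).toReal - (dyEnv f h g γ b).toReal| ≤ K * ‖a - b‖) := by
  have hM (w : E) : moreauEnv g γ w ≠ ⊤ ∧ moreauEnv g γ w ≠ ⊥ :=
    ⟨moreauEnv_ne_top hgtop w, (hpb γ hγ0 hγ1 w).ne'⟩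
  set v : E → E := fun x ↦ gradient f x + gradient h x
  set F : E → ℝ := fun x ↦
    f x + h x - γ / 2 * ‖v x‖ ^ 2 + (moreauEnv g γ (x - γ • v x)).toReal
  have hdy (x : E) : dyEnv f h g γ x = F x := by
    rw [dyEnv_eq_add_moreauEnv f h g hγ0.ne', ← EReal.coe_toReal (hM _).1 (hM _).2,
      ← EReal.coe_add]
  have hf : LipschitzWith _ (gradient f) :=
    .of_dist_le' (by simpa only [dist_eq_norm] using hflip)
  have hh : LipschitzWith _ (gradient h) :=
    .of_dist_le' (by simpa only [dist_eq_norm] using hhlip)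
  have hv : LipschitzWith _ v := hf.add hh
  have hF : LocallyLipschitz F := by
    have hfL := (contDiff_one_of_continuous_gradient hfd hf.continuous).locallyLipschitz
    have hhL := (contDiff_one_of_continuous_gradient hhd hh.continuous).locallyLipschitz
    have hvsq : LocallyLipschitz fun x ↦ γ / 2 * ‖v x‖ ^ 2 :=
      (contDiff_const.mul (contDiff_norm_sq ℝ)).locallyLipschitz.comp hv.locallyLipschitz
    have hstep : LocallyLipschitz fun x ↦ x - γ • v x :=
      LocallyLipschitz.id.sub ((lipschitzWith_smul γ).comp hv).locallyLipschitz
    exact ((hfL.add hhL).sub hvsq).add ((locallyLipschitz_toReal_moreauEnv hM).comp hstep)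
  refine ⟨fun x ↦ hdy x ▸ ⟨EReal.coe_ne_top _, EReal.coe_ne_bot _⟩, fun x ↦ ?_⟩
  obtain ⟨K, U, hU, hK⟩ := hF x
  refine ⟨U, hU, K, K.2, fun a ha b hb ↦ ?_⟩
  simpa only [hdy, EReal.toReal_coe, dist_eq_norm, Real.norm_eq_abs]
    using hK.dist_le_mul a ha b hb

theorem dyEnv_real_and_locallyLipschitz
    {E : Type*} [NormedAddCommGroup E] [InnerProductSpace ℝ E] [FiniteDimensional ℝ E]
    (f h : E → ℝ) (g : E → EReal) (Lf Lh γg : ℝ)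
    (hLf : 0 ≤ Lf) (hLh : 0 ≤ Lh)
    (hfd : Differentiable ℝ f)
    (hflip : ∀ x y : E, ‖gradient f x - gradient f y‖ ≤ Lf * ‖x - y‖)
    (hhd : Differentiable ℝ h)
    (hhlip : ∀ x y : E, ‖gradient h x - gradient h y‖ ≤ Lh * ‖x - y‖)
    (hγg : 0 < γg)
    (hgtop : ∃ x, g x ≠ ⊤) (hgbot : ∀ x, g x ≠ ⊥)
    (hglsc : LowerSemicontinuous g)
    (hpb : ∀ γ : ℝ, 0 < γ → γ < γg → ∀ w : E,
      ⊥ < ⨅ y : E, (g y + ((1 / (2 * γ) * ‖y - w‖ ^ 2 : ℝ) : EReal)))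
    (hattain : ∃ xs : E, ∀ x : E,
      (f xs : EReal) + g xs + (h xs : EReal) ≤ (f x : EReal) + g x + (h x : EReal))
    (γ : ℝ) (hγ0 : 0 < γ) (hγ1 : γ < γg) (hγ2 : γ * (Lf + Lh) < 1) :
    (∀ x : E, dyEnv f h g γ x ≠ ⊤ ∧ dyEnv f h g γ x ≠ ⊥) ∧
      (∀ x : E, ∃ U ∈ nhds x, ∃ K : ℝ, 0 ≤ K ∧ ∀ a ∈ U, ∀ b ∈ U,
        |(dyEnv f h g γ a).toReal - (dyEnv f h g γ b).toReal| ≤ K * ‖a - b‖) :=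
  dyEnv_real_and_locallyLipschitz_general f h g Lf Lh γg hfd hflip hhd hhlip hgtop hpb γ hγ0 hγ1
end

section
/- Suppose Assumption A holds and in addition g is ρ-weakly convex. Then for every sequence of parameters γ_k > 0 with γ_k → 0, the Davis–Yin envelopes φ_{γ_k}^DY epi-converge to φ = f + g + h; concretely, for every x ∈ ℝ^d: (a) for every sequence x_k → x, liminf_{k→∞} φ_{γ_k}^DY(x_k) ≥ φ(x) (liminf taken in ℝ ∪ {±∞}), and (b) there exists a sequence x_k → x such that limsup_{k→∞} φ_{γ_k}^DY(x_k) ≤ φ(x). -/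
/-!
The Davis–Yin envelope only sees `f` and `h` through `F = f + h` and `∇f + ∇h`, i.e. it is a
forward–backward envelope of `F + g`. Taking `y = x` bounds every envelope at `x` by `φ(x)`, so the
constant sequence is a recovery sequence. For the liminf, fix a real `M < g(x)`: lower
semicontinuity gives `g > M` on a ball of radius `δ` around `x`, and prox-boundedness gives a
global quadratic minorant `g ≥ c - α‖·‖²`. For `y` in the ball the penalty `‖y - x_k‖² / (2γ_k)`
absorbs the linear term up to `γ_k ‖∇F‖² / 2`; outside the ball `‖y - x_k‖ ≥ δ / 2`, and once
`1 / (2γ_k)` is large the penalty dominates both the linear term and the minorant. Hence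
`φ_{γ_k}^DY(x_k) ≥ F(x_k) + M - O(γ_k)`.
-/

open scoped RealInnerProductSpace
open Filter

/-- `g` is `ρ`-weakly convex: `g + (ρ/2)‖·‖²` is convex (extended-real-valued version). -/
def WeaklyConvexE {E : Type*} [NormedAddCommGroup E] [InnerProductSpace ℝ E]
    (ρ : ℝ) (g : E → EReal) : Prop :=
  ∀ x y : E, ∀ t : ℝ, 0 ≤ t → t ≤ 1 →
    g (t • x + (1 - t) • y) + (((ρ / 2) * ‖t • x + (1 - t) • y‖ ^ 2 : ℝ) : EReal) ≤
      (t : EReal) * (g x + (((ρ / 2) * ‖x‖ ^ 2 : ℝ) : EReal)) +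
        ((1 - t : ℝ) : EReal) * (g y + (((ρ / 2) * ‖y‖ ^ 2 : ℝ) : EReal))

open Topology

theorem exists_coe_sub_le_of_bot_lt_iInf {ι : Type*} {g : ι → EReal} {q : ι → ℝ}
    (h : ⊥ < ⨅ i, (g i + (q i : EReal))) : ∃ c : ℝ, ∀ i, ((c - q i : ℝ) : EReal) ≤ g i := by
  obtain ⟨c, -, hc⟩ := EReal.exists_between_coe_real h
  exact ⟨c, fun i => EReal.sub_le_of_le_add (hc.le.trans (iInf_le _ i))⟩

theorem EReal.coe_add_le_of_forall_coe_lt {a : ℝ} {b L : EReal}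
    (h : ∀ M : ℝ, (M : EReal) < b → ((a + M : ℝ) : EReal) ≤ L) : (a : EReal) + b ≤ L := by
  induction b with
  | bot => simp
  | coe r =>
    refine EReal.ge_of_forall_gt_iff_ge.1 fun z hz => ?_
    have hzr : z - a < r := by
      rw [← EReal.coe_add, EReal.coe_lt_coe_iff] at hz
      linarith
    simpa using h (z - a) (EReal.coe_lt_coe_iff.2 hzr)
  | top =>
    refine EReal.ge_of_forall_gt_iff_ge.1 fun z _ => ?_
    simpa using h (z - a) (EReal.coe_lt_top _)

theorem neg_mul_add_sq_div_ge {γ : ℝ} (hγ : 0 < γ) (V t : ℝ) :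
    -(γ * V ^ 2 / 2) ≤ -(V * t) + 1 / (2 * γ) * t ^ 2 := by
  have key : -(V * t) + 1 / (2 * γ) * t ^ 2 + γ * V ^ 2 / 2 = (t - γ * V) ^ 2 / (2 * γ) := by
    field_simp
    ring
  have : 0 ≤ (t - γ * V) ^ 2 / (2 * γ) := by positivity
  linarith

theorem le_neg_mul_add_sq_of_large {α β V δ t K : ℝ} (hV : 0 ≤ V) (hδ : 0 < δ)
    (ht : δ / 2 ≤ t) (hβ : 2 * α + 2 * V / δ + 4 * max K 0 / δ ^ 2 ≤ β) :
    K ≤ -(V * t) + β * t ^ 2 - 2 * α * t ^ 2 := by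
  have ht0 : 0 ≤ t := by linarith
  have hlin : V * t ≤ 2 * V / δ * t ^ 2 := by
    rw [div_mul_eq_mul_div, le_div_iff₀ hδ]
    nlinarith [mul_nonneg hV ht0]
  have hK : K ≤ 4 * max K 0 / δ ^ 2 * t ^ 2 := by
    have hsq : δ ^ 2 / 4 ≤ t ^ 2 := by nlinarith
    calc K ≤ 4 * max K 0 / δ ^ 2 * (δ ^ 2 / 4) := by field_simp; exact le_max_left K 0
      _ ≤ 4 * max K 0 / δ ^ 2 * t ^ 2 := by gcongr
  have hpen : (2 * α + 2 * V / δ + 4 * max K 0 / δ ^ 2) * t ^ 2 ≤ β * t ^ 2 := by gcongr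
  nlinarith

theorem tendsto_one_div_two_mul_atTop {ι : Type*} {l : Filter ι} {γ : ι → ℝ}
    (hpos : ∀ i, 0 < γ i) (h0 : Tendsto γ l (𝓝 0)) :
    Tendsto (fun i => 1 / (2 * γ i)) l atTop := by
  have h2 : Tendsto (fun i => 2 * γ i) l (𝓝[>] 0) :=
    tendsto_nhdsWithin_iff.2 ⟨by simpa using h0.const_mul 2, .of_forall fun i => by
      simpa using hpos i⟩
  exact h2.inv_tendsto_nhdsGT_zero.congr fun i => (one_div _).symm

section ForwardBackward

variable {E : Type*} [NormedAddCommGroup E] [InnerProductSpace ℝ E]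

noncomputable def fbEnv (F : E → ℝ) (G : E → E) (g : E → EReal) (γ : ℝ) (x : E) : EReal :=
  ⨅ y : E, (((F x + ⟪G x, y - x⟫ + 1 / (2 * γ) * ‖y - x‖ ^ 2 : ℝ) : EReal) + g y)

theorem dyEnv_eq_fbEnv [CompleteSpace E] (f h : E → ℝ) (g : E → EReal) (γ : ℝ) :
    dyEnv f h g γ = fbEnv (f + h) (gradient f + gradient h) g γ := by
  ext x
  refine iInf_congr fun y => ?_
  congr 2
  simp only [Pi.add_apply, inner_add_left]
  ring

theorem fbEnv_le (F : E → ℝ) (G : E → E) (g : E → EReal) (γ : ℝ) (x : E) :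
    fbEnv F G g γ x ≤ (F x : EReal) + g x :=
  (iInf_le _ x).trans_eq (by simp)

theorem neg_mul_norm_le_inner {v : E} {V : ℝ} (hv : ‖v‖ ≤ V) (u : E) : -(V * ‖u‖) ≤ ⟪v, u⟫ := by
  have := neg_abs_le ⟪v, u⟫
  have := abs_real_inner_le_norm v u
  nlinarith [norm_nonneg u]

theorem coe_sub_le_fbEnv {F : E → ℝ} {G : E → E} {g : E → EReal} {x w : E} {c α M δ V R γ : ℝ}
    (hc : ∀ y, ((c - α * ‖y‖ ^ 2 : ℝ) : EReal) ≤ g y) (hα : 0 ≤ α)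
    (hM : ∀ y, dist y x < δ → (M : EReal) < g y) (hδ : 0 < δ)
    (hw : dist w x < δ / 2) (hR : ‖w‖ ≤ R) (hV : ‖G w‖ ≤ V) (hγ : 0 < γ)
    (hβ : 2 * α + 2 * V / δ + 4 * max (M - c + 2 * α * R ^ 2) 0 / δ ^ 2 ≤ 1 / (2 * γ)) :
    ((F w + M - γ * V ^ 2 / 2 : ℝ) : EReal) ≤ fbEnv F G g γ w := by
  refine le_iInf fun y => ?_
  have hinner := neg_mul_norm_le_inner hV (y - w)
  by_cases hy : dist y x < δ
  · have hnear := neg_mul_add_sq_div_ge hγ V ‖y - w‖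
    calc ((F w + M - γ * V ^ 2 / 2 : ℝ) : EReal) = ((F w - γ * V ^ 2 / 2 : ℝ) : EReal) + M := by
          rw [← EReal.coe_add]; ring_nf
      _ ≤ _ := add_le_add (EReal.coe_le_coe_iff.2 (by linarith)) (hM y hy).le
  · have ht : δ / 2 ≤ ‖y - w‖ := by
      rw [← dist_eq_norm]
      linarith [dist_triangle y w x]
    have hy2 : ‖y‖ ^ 2 ≤ 2 * ‖y - w‖ ^ 2 + 2 * R ^ 2 := by
      have hyR : ‖y‖ ≤ ‖y - w‖ + R := by linarith [norm_sub_norm_le y w]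
      nlinarith [sq_nonneg (‖y - w‖ - R), mul_self_le_mul_self (norm_nonneg y) hyR]
    have hfar := le_neg_mul_add_sq_of_large ((norm_nonneg _).trans hV) hδ ht hβ
    calc ((F w + M - γ * V ^ 2 / 2 : ℝ) : EReal)
        ≤ ((F w + ⟪G w, y - w⟫ + 1 / (2 * γ) * ‖y - w‖ ^ 2 + (c - α * ‖y‖ ^ 2) : ℝ) : EReal) :=
          EReal.coe_le_coe_iff.2 (by nlinarith [mul_le_mul_of_nonneg_left hy2 hα])
      _ = _ := EReal.coe_add _ _
      _ ≤ _ := add_le_add_right (hc y) _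

theorem coe_add_le_liminf_fbEnv {F : E → ℝ} {G : E → E} {g : E → EReal} {x : E} {c α : ℝ}
    {γ : ℕ → ℝ} {xs : ℕ → E}
    (hF : ContinuousAt F x) (hG : ContinuousAt G x) (hg : LowerSemicontinuousAt g x)
    (hc : ∀ y, ((c - α * ‖y‖ ^ 2 : ℝ) : EReal) ≤ g y) (hα : 0 ≤ α)
    (hγpos : ∀ k, 0 < γ k) (hγ0 : Tendsto γ atTop (𝓝 0)) (hxs : Tendsto xs atTop (𝓝 x)) :
    (F x : EReal) + g x ≤ atTop.liminf fun k => fbEnv F G g (γ k) (xs k) := by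
  refine EReal.coe_add_le_of_forall_coe_lt fun M hM => ?_
  obtain ⟨δ, hδ, hMδ⟩ := Metric.eventually_nhds_iff.1 (hg M hM)
  set V := ‖G x‖ + 1
  set R := ‖x‖ + 1
  have hbound : ∀ᶠ k in atTop,
      ((F (xs k) + M - γ k * V ^ 2 / 2 : ℝ) : EReal) ≤ fbEnv F G g (γ k) (xs k) := by
    have hclose : ∀ᶠ k in atTop, dist (xs k) x < δ / 2 :=
      Metric.tendsto_nhds.1 hxs _ (half_pos hδ)
    have hGbd : ∀ᶠ k in atTop, ‖G (xs k)‖ < V :=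
      hxs.eventually (hG.norm.eventually_lt continuousAt_const (lt_add_one _))
    have hRbd : ∀ᶠ k in atTop, ‖xs k‖ < R :=
      hxs.eventually (continuous_norm.continuousAt.eventually_lt continuousAt_const
        (lt_add_one _))
    have hβ := (tendsto_one_div_two_mul_atTop hγpos hγ0).eventually_ge_atTop
      (2 * α + 2 * V / δ + 4 * max (M - c + 2 * α * R ^ 2) 0 / δ ^ 2)
    filter_upwards [hclose, hGbd, hRbd, hβ] with k hk hGk hRk hβk
    exact coe_sub_le_fbEnv hc hα (fun y hy => hMδ hy) hδ hk hRk.le hGk.le (hγpos k) hβk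
  have hlim : Tendsto (fun k => ((F (xs k) + M - γ k * V ^ 2 / 2 : ℝ) : EReal)) atTop
      (𝓝 ((F x + M : ℝ) : EReal)) := by
    refine EReal.tendsto_coe.2 ?_
    simpa using ((hF.tendsto.comp hxs).add_const M).sub ((hγ0.mul_const (V ^ 2)).div_const 2)
  exact hlim.liminf_eq ▸ liminf_le_liminf hbound

end ForwardBackward

theorem dyEnv_epi_converges_general
    {E : Type*} [NormedAddCommGroup E] [InnerProductSpace ℝ E] [FiniteDimensional ℝ E]
    (f h : E → ℝ) (g : E → EReal) (Lf Lh γg : ℝ)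
    (hfd : Differentiable ℝ f)
    (hflip : ∀ x y : E, ‖gradient f x - gradient f y‖ ≤ Lf * ‖x - y‖)
    (hhd : Differentiable ℝ h)
    (hhlip : ∀ x y : E, ‖gradient h x - gradient h y‖ ≤ Lh * ‖x - y‖)
    (hγg : 0 < γg)
    (hglsc : LowerSemicontinuous g)
    (hpb : ∀ γ : ℝ, 0 < γ → γ < γg → ∀ w : E,
      ⊥ < ⨅ y : E, (g y + ((1 / (2 * γ) * ‖y - w‖ ^ 2 : ℝ) : EReal)))
    (γ : ℕ → ℝ) (hγpos : ∀ k, 0 < γ k) (hγ0 : Tendsto γ atTop (nhds 0)) :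
    ∀ x : E,
      (∀ xs : ℕ → E, Tendsto xs atTop (nhds x) →
        (f x : EReal) + g x + (h x : EReal) ≤
          atTop.liminf (fun k => dyEnv f h g (γ k) (xs k))) ∧
      (∃ xs : ℕ → E, Tendsto xs atTop (nhds x) ∧
        atTop.limsup (fun k => dyEnv f h g (γ k) (xs k)) ≤
          (f x : EReal) + g x + (h x : EReal)) := by
  intro x
  obtain ⟨c, hc⟩ : ∃ c : ℝ, ∀ y, ((c - 1 / (2 * (γg / 2)) * ‖y‖ ^ 2 : ℝ) : EReal) ≤ g y :=
    exists_coe_sub_le_of_bot_lt_iInf <| by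
      simpa only [sub_zero] using hpb (γg / 2) (half_pos hγg) (half_lt_self hγg) 0
  have hF : Continuous (f + h) := hfd.continuous.add hhd.continuous
  have hG : Continuous (gradient f + gradient h) :=
    (LipschitzWith.of_dist_le' fun x y => by simpa only [dist_eq_norm] using hflip x y).continuous
      |>.add (LipschitzWith.of_dist_le' fun x y => by
        simpa only [dist_eq_norm] using hhlip x y).continuous
  have hφ : (f x : EReal) + g x + h x = ((f + h) x : EReal) + g x := by
    rw [Pi.add_apply, EReal.coe_add, add_right_comm]
  simp only [dyEnv_eq_fbEnv, hφ]
  exact ⟨fun xs hxs => coe_add_le_liminf_fbEnv hF.continuousAt hG.continuousAt (hglsc x) hc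
      (by positivity) hγpos hγ0 hxs,
    fun _ => x, tendsto_const_nhds, limsup_le_of_le (h := .of_forall fun _ => fbEnv_le _ _ _ _ _)⟩

theorem dyEnv_epi_converges
    {E : Type*} [NormedAddCommGroup E] [InnerProductSpace ℝ E] [FiniteDimensional ℝ E]
    (f h : E → ℝ) (g : E → EReal) (Lf Lh γg ρ : ℝ)
    (hLf : 0 ≤ Lf) (hLh : 0 ≤ Lh) (hρ : 0 ≤ ρ)
    (hfd : Differentiable ℝ f)
    (hflip : ∀ x y : E, ‖gradient f x - gradient f y‖ ≤ Lf * ‖x - y‖)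
    (hhd : Differentiable ℝ h)
    (hhlip : ∀ x y : E, ‖gradient h x - gradient h y‖ ≤ Lh * ‖x - y‖)
    (hγg : 0 < γg)
    (hgtop : ∃ x, g x ≠ ⊤) (hgbot : ∀ x, g x ≠ ⊥)
    (hglsc : LowerSemicontinuous g)
    (hpb : ∀ γ : ℝ, 0 < γ → γ < γg → ∀ w : E,
      ⊥ < ⨅ y : E, (g y + ((1 / (2 * γ) * ‖y - w‖ ^ 2 : ℝ) : EReal)))
    (hattain : ∃ xs : E, ∀ x : E,
      (f xs : EReal) + g xs + (h xs : EReal) ≤ (f x : EReal) + g x + (h x : EReal))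
    (hwc : WeaklyConvexE ρ g)
    (γ : ℕ → ℝ) (hγpos : ∀ k, 0 < γ k) (hγ0 : Tendsto γ atTop (nhds 0)) :
    ∀ x : E,
      (∀ xs : ℕ → E, Tendsto xs atTop (nhds x) →
        (f x : EReal) + g x + (h x : EReal) ≤
          atTop.liminf (fun k => dyEnv f h g (γ k) (xs k))) ∧
      (∃ xs : ℕ → E, Tendsto xs atTop (nhds x) ∧
        atTop.limsup (fun k => dyEnv f h g (γ k) (xs k)) ≤
          (f x : EReal) + g x + (h x : EReal)) :=
  dyEnv_epi_converges_general f h g Lf Lh γg hfd hflip hhd hhlip hγg hglsc hpb γ hγpos hγ0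
end

section
/- Suppose Assumption A holds, f and h are twice continuously differentiable with Lipschitz continuous Hessians, and g is ρ-weakly convex. Then for every γ ∈ (0, min{1/ρ, 1/L_f}), the Davis–Yin envelope φ_γ^DY is real-valued and continuously differentiable on ℝ^d, with gradient ∇φ_γ^DY(x) = (1/γ)(x − Y_γ(x)) − ∇²(f+h)(x) (x − Y_γ(x)) for every x ∈ ℝ^d, where ∇²(f+h)(x) denotes the Hessian of f + h at x acting as a linear map. -/
/-!
Write `F = f + h`, `v = ∇F` and `w(x) = x - γ v(x)`. Completing the square in the definition of the
envelope gives `φ_γ^DY(x) = F(x) - (γ/2)‖v(x)‖² + m(x)`, where `m(x)` is the value of the proximal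
problem of `g` at `w(x)`, attained at `Y(x)`. Weak convexity makes the proximal objective strongly
convex for `γρ < 1`, so `Y` is a Lipschitz function of `w` and hence continuous. Comparing the
proximal objective at `Y(x)` and `Y(x₀)` sandwiches `m(x) - m(x₀)` between two quadratics in
`w(x) - w(x₀)` whose linear parts differ by `O(‖Y(x) - Y(x₀)‖)`; this makes `m` differentiable with
`Dm(x₀) = ⟪(w(x₀) - Y(x₀))/γ, Dw(x₀) ·⟫`. The chain rule and the symmetry of the Hessian of `F` then
collapse the terms to the stated gradient, which is continuous because `Y` and `∇²F` are.
-/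

open scoped RealInnerProductSpace

open Asymptotics Filter Topology

lemma EReal.exists_coe_of_add_coe_le_coe {a : EReal} (ha : a ≠ ⊥) {s t : ℝ}
    (h : a + s ≤ t) : ∃ r : ℝ, a = r ∧ r + s ≤ t := by
  induction a using EReal.rec with
  | bot => exact absurd rfl ha
  | coe r => exact ⟨r, rfl, by exact_mod_cast h⟩
  | top => simp at h

section ProxPoint

variable {E : Type*} [NormedAddCommGroup E] {g : E → EReal} {γ ρ : ℝ}

def IsProxPoint (g : E → EReal) (γ : ℝ) (w p : E) : Prop :=
  ∀ z, g p + ((1 / (2 * γ) * ‖p - w‖ ^ 2 : ℝ) : EReal) ≤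
    g z + ((1 / (2 * γ) * ‖z - w‖ ^ 2 : ℝ) : EReal)

lemma IsProxPoint.ne_top {w p z : E} (hp : IsProxPoint g γ w p) (hz : g z ≠ ⊤) : g p ≠ ⊤ :=
  (EReal.add_ne_top_iff_ne_top_left (EReal.coe_ne_bot _) (EReal.coe_ne_top _)).mp
    (ne_top_of_le_ne_top (EReal.add_ne_top hz (EReal.coe_ne_top _)) (hp z))

lemma IsProxPoint.toReal_add_le {w p z : E} (hp : IsProxPoint g γ w p) (hgbot : ∀ x, g x ≠ ⊥)
    (hz : g z ≠ ⊤) :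
    (g p).toReal + 1 / (2 * γ) * ‖p - w‖ ^ 2 ≤ (g z).toReal + 1 / (2 * γ) * ‖z - w‖ ^ 2 := by
  have h := hp z
  rw [← EReal.coe_toReal (hp.ne_top hz) (hgbot p), ← EReal.coe_toReal hz (hgbot z)] at h
  exact_mod_cast h

variable [InnerProductSpace ℝ E]

lemma norm_midpoint_sq (a b : E) :
    ‖(1 / 2 : ℝ) • a + (1 - 1 / 2 : ℝ) • b‖ ^ 2 = (‖a‖ ^ 2 + ‖b‖ ^ 2) / 2 - ‖a - b‖ ^ 2 / 4 := by
  simp only [← real_inner_self_eq_norm_sq, inner_add_add_self, inner_sub_sub_self,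
    real_inner_smul_left, real_inner_smul_right, real_inner_comm a b]
  ring

lemma two_inner_sub_sub_eq (p₁ p₂ w₁ w₂ : E) :
    2 * ⟪p₁ - p₂, w₁ - w₂⟫ =
      ‖p₂ - w₁‖ ^ 2 - ‖p₁ - w₁‖ ^ 2 + ‖p₁ - w₂‖ ^ 2 - ‖p₂ - w₂‖ ^ 2 := by
  simp only [← real_inner_self_eq_norm_sq, inner_sub_left, inner_sub_right,
    real_inner_comm p₁, real_inner_comm p₂]
  ring

/-- Only the midpoint inequality of weak convexity is used, whence the constant `(1/γ - ρ)/4`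
instead of the optimal `(1/γ - ρ)/2`. -/
lemma IsProxPoint.quadratic_growth (hgbot : ∀ x, g x ≠ ⊥) (hwc : WeaklyConvexE ρ g) {w p y : E}
    (hp : IsProxPoint g γ w p) {rp ry : ℝ} (hrp : g p = rp) (hry : g y = ry) :
    rp + 1 / (2 * γ) * ‖p - w‖ ^ 2 + (1 / γ - ρ) / 4 * ‖y - p‖ ^ 2 ≤
      ry + 1 / (2 * γ) * ‖y - w‖ ^ 2 := by
  set m := (1 / 2 : ℝ) • y + (1 - 1 / 2 : ℝ) • p with hm
  have hconv := hwc y p (1 / 2) (by norm_num) (by norm_num)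
  rw [← hm, hry, hrp] at hconv
  norm_cast at hconv
  obtain ⟨rm, hrm, hconv⟩ := EReal.exists_coe_of_add_coe_le_coe (hgbot m) hconv
  have hmin := hp m
  rw [hrp, hrm] at hmin
  norm_cast at hmin
  have hmw : m - w = (1 / 2 : ℝ) • (y - w) + (1 - 1 / 2 : ℝ) • (p - w) := by rw [hm]; module
  rw [hm, norm_midpoint_sq] at hconv
  rw [hmw, norm_midpoint_sq, sub_sub_sub_cancel_right] at hmin
  linear_combination 2 * hmin + 2 * hconv

lemma IsProxPoint.norm_sub_le (hγ : 0 < γ) (hγρ : γ * ρ < 1) (hgbot : ∀ x, g x ≠ ⊥)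
    (hwc : WeaklyConvexE ρ g) {w₁ w₂ p₁ p₂ : E} (hp₁ : IsProxPoint g γ w₁ p₁)
    (hp₂ : IsProxPoint g γ w₂ p₂) (hg₁ : g p₁ ≠ ⊤) (hg₂ : g p₂ ≠ ⊤) :
    ‖p₁ - p₂‖ ≤ 2 / (1 - γ * ρ) * ‖w₁ - w₂‖ := by
  lift g p₁ to ℝ using ⟨hg₁, hgbot p₁⟩ with r₁ hr₁
  lift g p₂ to ℝ using ⟨hg₂, hgbot p₂⟩ with r₂ hr₂
  have h₁ := hp₁.quadratic_growth hgbot hwc hr₁.symm hr₂.symm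
  have h₂ := hp₂.quadratic_growth hgbot hwc hr₂.symm hr₁.symm
  rw [norm_sub_rev p₂ p₁] at h₁
  have hcs := mul_le_mul_of_nonneg_left (real_inner_le_norm (p₁ - p₂) (w₁ - w₂))
    (one_div_pos.mpr hγ).le
  have hsum : (1 / γ - ρ) / 2 * ‖p₁ - p₂‖ ^ 2 ≤ 1 / γ * (‖p₁ - p₂‖ * ‖w₁ - w₂‖) := by
    linear_combination h₁ + h₂ + hcs - 1 / (2 * γ) * two_inner_sub_sub_eq p₁ p₂ w₁ w₂
  have hmul : (1 - γ * ρ) * ‖p₁ - p₂‖ * ‖p₁ - p₂‖ ≤ 2 * ‖w₁ - w₂‖ * ‖p₁ - p₂‖ := by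
    have := mul_le_mul_of_nonneg_left hsum (by positivity : (0 : ℝ) ≤ 2 * γ)
    field_simp at this
    linarith
  rcases (norm_nonneg (p₁ - p₂)).eq_or_lt with h0 | hpos
  · rw [← h0]; positivity
  · rw [div_mul_eq_mul_div, le_div_iff₀ (by linarith)]
    nlinarith [le_of_mul_le_mul_right hmul hpos]

lemma continuous_of_isProxPoint {X : Type*} [TopologicalSpace X] (hγ : 0 < γ) (hγρ : γ * ρ < 1)
    (hgbot : ∀ x, g x ≠ ⊥) (hwc : WeaklyConvexE ρ g) {w p : X → E}
    (hp : ∀ x, IsProxPoint g γ (w x) (p x)) (hfin : ∀ x, g (p x) ≠ ⊤) (hw : Continuous w) :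
    Continuous p := by
  refine continuous_iff_continuousAt.mpr fun x₀ => tendsto_iff_norm_sub_tendsto_zero.mpr ?_
  have hw₀ := (tendsto_iff_norm_sub_tendsto_zero.mp (hw.tendsto x₀)).const_mul (2 / (1 - γ * ρ))
  rw [mul_zero] at hw₀
  exact squeeze_zero (fun _ => norm_nonneg _)
    (fun x => (hp x).norm_sub_le hγ hγρ hgbot hwc (hp x₀) (hfin x) (hfin x₀)) hw₀

lemma abs_proxValue_sub_sub_inner_le (hγ : 0 < γ) {q₀ q₁ : ℝ} {p₀ p₁ w₀ w₁ : E}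
    (h₀ : q₀ + 1 / (2 * γ) * ‖p₀ - w₀‖ ^ 2 ≤ q₁ + 1 / (2 * γ) * ‖p₁ - w₀‖ ^ 2)
    (h₁ : q₁ + 1 / (2 * γ) * ‖p₁ - w₁‖ ^ 2 ≤ q₀ + 1 / (2 * γ) * ‖p₀ - w₁‖ ^ 2) :
    |q₁ + 1 / (2 * γ) * ‖p₁ - w₁‖ ^ 2 - (q₀ + 1 / (2 * γ) * ‖p₀ - w₀‖ ^ 2)
        - ⟪(1 / γ) • (w₀ - p₀), w₁ - w₀⟫|
      ≤ ‖w₁ - w₀‖ * (1 / (2 * γ) * ‖w₁ - w₀‖ + 1 / γ * ‖p₁ - p₀‖) := by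
  set d := w₁ - w₀
  have hA : ‖p₀ - w₁‖ ^ 2 = ‖p₀ - w₀‖ ^ 2 - 2 * ⟪p₀ - w₀, d⟫ + ‖d‖ ^ 2 := by
    rw [← norm_sub_sq_real, sub_sub_sub_cancel_right]
  have hB : ‖p₁ - w₁‖ ^ 2 = ‖p₁ - w₀‖ ^ 2 - 2 * ⟪p₁ - w₀, d⟫ + ‖d‖ ^ 2 := by
    rw [← norm_sub_sq_real, sub_sub_sub_cancel_right]
  have hC : ⟪p₁ - p₀, d⟫ = ⟪p₁ - w₀, d⟫ - ⟪p₀ - w₀, d⟫ := by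
    rw [← inner_sub_left, sub_sub_sub_cancel_right]
  have hc : ⟪(1 / γ) • (w₀ - p₀), d⟫ = -(1 / γ * ⟪p₀ - w₀, d⟫) := by
    rw [real_inner_smul_left, ← neg_sub p₀ w₀, inner_neg_left, mul_neg]
  have hcs := abs_le.mp (abs_real_inner_le_norm (p₁ - p₀) d)
  rw [hC] at hcs
  rw [hA] at h₁
  rw [hB] at h₁ ⊢
  rw [hc, abs_le]
  have hγ' : 0 < 1 / γ := by positivity
  have hκ : 1 / γ = 2 * (1 / (2 * γ)) := by ring
  have hd : 0 ≤ 1 / (2 * γ) * ‖d‖ ^ 2 := by positivity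
  constructor
  · nlinarith [mul_le_mul_of_nonneg_left hcs.1 hγ'.le]
  · nlinarith [mul_le_mul_of_nonneg_left hcs.2 hγ'.le]

lemma hasFDerivAt_proxValue {X : Type*} [NormedAddCommGroup X] [NormedSpace ℝ X] (hγ : 0 < γ)
    {q : X → ℝ} {p w : X → E} {w' : X →L[ℝ] E} {x₀ : X}
    (hmin : ∀ x x', q x + 1 / (2 * γ) * ‖p x - w x‖ ^ 2 ≤ q x' + 1 / (2 * γ) * ‖p x' - w x‖ ^ 2)
    (hw : HasFDerivAt w w' x₀) (hp : ContinuousAt p x₀) :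
    HasFDerivAt (fun x => q x + 1 / (2 * γ) * ‖p x - w x‖ ^ 2)
      ((innerSL ℝ ((1 / γ) • (w x₀ - p x₀))).comp w') x₀ := by
  set c := (1 / γ) • (w x₀ - p x₀)
  set M := fun x => q x + 1 / (2 * γ) * ‖p x - w x‖ ^ 2
  have hsmall : Tendsto (fun x => 1 / (2 * γ) * ‖w x - w x₀‖ + 1 / γ * ‖p x - p x₀‖)
      (𝓝 x₀) (𝓝 0) := by
    have hw₀ := tendsto_iff_norm_sub_tendsto_zero.mp hw.continuousAt.tendsto
    have hp₀ := tendsto_iff_norm_sub_tendsto_zero.mp hp.tendsto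
    simpa using (hw₀.const_mul (1 / (2 * γ))).add (hp₀.const_mul (1 / γ))
  have hrem : (fun x => M x - M x₀ - ⟪c, w x - w x₀⟫) =o[𝓝 x₀] fun x => x - x₀ := by
    have := hw.isBigO_sub.norm_norm.mul_isLittleO ((isLittleO_one_iff ℝ).mpr hsmall)
    refine ((isBigO_of_le _ fun x => ?_).trans_isLittleO this).trans_isBigO ?_
    · rw [Real.norm_eq_abs, Real.norm_eq_abs]
      exact (abs_proxValue_sub_sub_inner_le hγ (hmin x₀ x) (hmin x x₀)).trans (le_abs_self _)
    · simpa using (isBigO_refl (fun x => x - x₀) _).norm_left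
  have hlin : (fun x => ⟪c, w x - w x₀ - w' (x - x₀)⟫) =o[𝓝 x₀] fun x => x - x₀ :=
    ((innerSL ℝ c).isBigO_comp _ _).trans_isLittleO hw.isLittleO
  refine HasFDerivAt.of_isLittleO ((hrem.add hlin).congr_left fun x => ?_)
  simp only [ContinuousLinearMap.comp_apply, innerSL_apply_apply, inner_sub_right]
  ring

end ProxPoint

section Smooth

variable {E : Type*} [NormedAddCommGroup E] [InnerProductSpace ℝ E] [CompleteSpace E] {γ : ℝ}

lemma ContDiff.gradient {F : E → ℝ} {m n : WithTop ℕ∞} (hF : ContDiff ℝ n F)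
    (hmn : m + 1 ≤ n) : ContDiff ℝ m (_root_.gradient F) :=
  (InnerProductSpace.toDual ℝ E).symm.contDiff.comp (hF.fderiv_right hmn)

lemma inner_fderiv_gradient_apply (F : E → ℝ) (x u z : E) :
    ⟪fderiv ℝ (gradient F) x u, z⟫ = fderiv ℝ (fderiv ℝ F) x u z := by
  change ⟪fderiv ℝ ((InnerProductSpace.toDual ℝ E).symm ∘ fderiv ℝ F) x u, z⟫ = _
  rw [LinearIsometryEquiv.comp_fderiv]
  exact InnerProductSpace.toDual_symm_apply

lemma inner_fderiv_gradient_comm {F : E → ℝ} (hF : ContDiff ℝ 2 F) (x u z : E) :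
    ⟪fderiv ℝ (gradient F) x u, z⟫ = ⟪fderiv ℝ (gradient F) x z, u⟫ := by
  rw [inner_fderiv_gradient_apply, inner_fderiv_gradient_apply]
  exact (hF.contDiffAt.isSymmSndFDerivAt (by simp)).eq u z

lemma hasGradientAt_envelope {F : E → ℝ} (hF : ContDiff ℝ 2 F) (hγ : 0 < γ)
    {q : E → ℝ} {p : E → E} {x₀ : E}
    (hmin : ∀ x x', q x + 1 / (2 * γ) * ‖p x - (x - γ • gradient F x)‖ ^ 2 ≤
      q x' + 1 / (2 * γ) * ‖p x' - (x - γ • gradient F x)‖ ^ 2)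
    (hp : ContinuousAt p x₀) :
    HasGradientAt (fun x => F x - γ / 2 * ‖gradient F x‖ ^ 2 +
        (q x + 1 / (2 * γ) * ‖p x - (x - γ • gradient F x)‖ ^ 2))
      ((1 / γ) • (x₀ - p x₀) - fderiv ℝ (gradient F) x₀ (x₀ - p x₀)) x₀ := by
  set H := fderiv ℝ (gradient F) x₀
  have hv : HasFDerivAt (gradient F) H x₀ :=
    ((hF.gradient (by norm_num)).differentiable one_ne_zero x₀).hasFDerivAt
  have hw : HasFDerivAt (fun x => x - γ • gradient F x) (ContinuousLinearMap.id ℝ E - γ • H) x₀ :=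
    (hasFDerivAt_id x₀).sub (hv.const_smul γ)
  have hF' := (hF.differentiable two_ne_zero x₀).hasGradientAt.hasFDerivAt
  have hΦ := (hF'.sub (hv.norm_sq.const_mul (γ / 2))).add (hasFDerivAt_proxValue hγ hmin hw hp)
  rw [hasGradientAt_iff_hasFDerivAt]
  refine hΦ.congr_fderiv (ContinuousLinearMap.ext fun z => ?_)
  have hsymm : ∀ a, ⟪a, H z⟫ = ⟪H a, z⟫ := fun a => by
    rw [real_inner_comm]; exact inner_fderiv_gradient_comm hF x₀ z a
  simp only [InnerProductSpace.toDual_apply_apply, add_apply, sub_apply, smul_apply,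
    ContinuousLinearMap.comp_apply, innerSL_apply_apply, ContinuousLinearMap.id_apply, map_sub,
    map_smul, smul_eq_mul, nsmul_eq_mul, hsymm]
  field_simp
  ring

lemma gradient_add_apply {f h : E → ℝ} {x : E} (hf : DifferentiableAt ℝ f x)
    (hh : DifferentiableAt ℝ h x) :
    gradient (fun w => f w + h w) x = gradient f x + gradient h x := by
  simp only [gradient, ← map_add, ← fderiv_add hf hh]
  rfl

lemma dyEnv_eq_of_isProxPoint {f h : E → ℝ} {g : E → EReal} {x p : E} {rp : ℝ} (hγ : 0 < γ)
    (hf : DifferentiableAt ℝ f x) (hh : DifferentiableAt ℝ h x)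
    (hp : IsProxPoint g γ (x - γ • gradient (fun w => f w + h w) x) p) (hrp : g p = rp) :
    dyEnv f h g γ x = ((f x + h x - γ / 2 * ‖gradient (fun w => f w + h w) x‖ ^ 2 +
      (rp + 1 / (2 * γ) * ‖p - (x - γ • gradient (fun w => f w + h w) x)‖ ^ 2) : ℝ) : EReal) := by
  rw [gradient_add_apply hf hh] at hp ⊢
  set v := gradient f x + gradient h x
  have hsq : ∀ y, f x + ⟪gradient f x, y - x⟫ + h x + ⟪gradient h x, y - x⟫ +
      1 / (2 * γ) * ‖y - x‖ ^ 2 =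
        f x + h x - γ / 2 * ‖v‖ ^ 2 + 1 / (2 * γ) * ‖y - (x - γ • v)‖ ^ 2 := by
    intro y
    rw [show y - (x - γ • v) = (y - x) + γ • v by abel, norm_add_sq_real (y - x), norm_smul,
      real_inner_smul_right, inner_add_right, real_inner_comm (y - x), real_inner_comm (y - x),
      Real.norm_of_nonneg hγ.le]
    field_simp
    ring
  simp only [dyEnv, hsq]
  refine le_antisymm (iInf_le_of_le p ?_) (le_iInf fun y => ?_)
  · rw [hrp]
    exact_mod_cast (show _ = _ by ring).le
  · have hpy := hp y
    rw [hrp] at hpy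
    revert hpy
    induction g y using EReal.rec with
    | bot =>
      intro hpy
      rw [EReal.bot_add, le_bot_iff, ← EReal.coe_add] at hpy
      exact absurd hpy (EReal.coe_ne_bot _)
    | coe r =>
      intro hpy
      norm_cast at hpy ⊢
      linarith
    | top =>
      intro _
      rw [EReal.add_top_of_ne_bot (EReal.coe_ne_bot _)]
      exact le_top

end Smooth

theorem dyEnv_differentiable_with_gradient_general
    {E : Type*} [NormedAddCommGroup E] [InnerProductSpace ℝ E] [FiniteDimensional ℝ E]
    (f h : E → ℝ) (g : E → EReal) (ρ : ℝ)
    (hfC2 : ContDiff ℝ 2 f) (hhC2 : ContDiff ℝ 2 h)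
    (hgtop : ∃ x, g x ≠ ⊤) (hgbot : ∀ x, g x ≠ ⊥)
    (hwc : WeaklyConvexE ρ g)
    (γ : ℝ) (hγ0 : 0 < γ) (hγρ : γ * ρ < 1)
    (Y : E → E)
    (hY : ∀ x : E, ∀ z : E,
      g (Y x) + ((1 / (2 * γ) *
        ‖Y x - (x - γ • gradient (fun w => f w + h w) x)‖ ^ 2 : ℝ) : EReal) ≤
      g z + ((1 / (2 * γ) *
        ‖z - (x - γ • gradient (fun w => f w + h w) x)‖ ^ 2 : ℝ) : EReal)) :
    (∀ x : E, dyEnv f h g γ x ≠ ⊤ ∧ dyEnv f h g γ x ≠ ⊥) ∧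
      ContDiff ℝ 1 (fun x : E => (dyEnv f h g γ x).toReal) ∧
      ∀ x : E, gradient (fun x : E => (dyEnv f h g γ x).toReal) x =
        (1 / γ) • (x - Y x) -
          fderiv ℝ (gradient (fun w => f w + h w)) x (x - Y x) := by
  have hF : ContDiff ℝ 2 (fun w => f w + h w) := hfC2.add hhC2
  have hv : ContDiff ℝ 1 (gradient fun w => f w + h w) := hF.gradient (by norm_num)
  obtain ⟨z, hz⟩ := hgtop
  have hfin : ∀ x, g (Y x) ≠ ⊤ := fun x => IsProxPoint.ne_top (hY x) hz
  have hYc : Continuous Y := continuous_of_isProxPoint hγ0 hγρ hgbot hwc hY hfin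
    (continuous_id.sub (hv.continuous.const_smul γ))
  have hdyEnv := fun x => dyEnv_eq_of_isProxPoint hγ0 (hfC2.differentiable two_ne_zero x)
    (hhC2.differentiable two_ne_zero x) (hY x) (EReal.coe_toReal (hfin x) (hgbot _)).symm
  have hgrad : ∀ x, HasGradientAt (fun x => (dyEnv f h g γ x).toReal)
      ((1 / γ) • (x - Y x) - fderiv ℝ (gradient fun w => f w + h w) x (x - Y x)) x := by
    simp only [hdyEnv, EReal.toReal_coe]
    exact fun x => hasGradientAt_envelope hF hγ0
      (fun x x' => IsProxPoint.toReal_add_le (hY x) hgbot (hfin x')) hYc.continuousAt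
  refine ⟨fun x => ?_, contDiff_one_iff_hasFDerivAt.mpr ⟨_, ?_, fun x => (hgrad x).hasFDerivAt⟩,
    fun x => (hgrad x).gradient⟩
  · rw [hdyEnv x]
    exact ⟨EReal.coe_ne_top _, EReal.coe_ne_bot _⟩
  · exact (InnerProductSpace.toDual ℝ E).continuous.comp <|
      ((continuous_id.sub hYc).const_smul _).sub
        ((hv.continuous_fderiv one_ne_zero).clm_apply (continuous_id.sub hYc))

theorem dyEnv_differentiable_with_gradient
    {E : Type*} [NormedAddCommGroup E] [InnerProductSpace ℝ E] [FiniteDimensional ℝ E]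
    (f h : E → ℝ) (g : E → EReal) (Lf Lh γg ρ : ℝ)
    (hLf : 0 ≤ Lf) (hLh : 0 ≤ Lh) (hρ : 0 ≤ ρ)
    (hfd : Differentiable ℝ f)
    (hflip : ∀ x y : E, ‖gradient f x - gradient f y‖ ≤ Lf * ‖x - y‖)
    (hhd : Differentiable ℝ h)
    (hhlip : ∀ x y : E, ‖gradient h x - gradient h y‖ ≤ Lh * ‖x - y‖)
    (hfC2 : ContDiff ℝ 2 f) (hhC2 : ContDiff ℝ 2 h)
    (hfHess : ∃ M : ℝ, ∀ x y : E,
      ‖fderiv ℝ (gradient f) x - fderiv ℝ (gradient f) y‖ ≤ M * ‖x - y‖)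
    (hhHess : ∃ M : ℝ, ∀ x y : E,
      ‖fderiv ℝ (gradient h) x - fderiv ℝ (gradient h) y‖ ≤ M * ‖x - y‖)
    (hγg : 0 < γg)
    (hgtop : ∃ x, g x ≠ ⊤) (hgbot : ∀ x, g x ≠ ⊥)
    (hglsc : LowerSemicontinuous g)
    (hpb : ∀ γ' : ℝ, 0 < γ' → γ' < γg → ∀ w : E,
      ⊥ < ⨅ y : E, (g y + ((1 / (2 * γ') * ‖y - w‖ ^ 2 : ℝ) : EReal)))
    (hattain : ∃ xs : E, ∀ x : E,
      (f xs : EReal) + g xs + (h xs : EReal) ≤ (f x : EReal) + g x + (h x : EReal))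
    (hwc : WeaklyConvexE ρ g)
    (γ : ℝ) (hγ0 : 0 < γ) (hγρ : γ * ρ < 1) (hγf : γ * Lf < 1)
    (Y : E → E)
    (hY : ∀ x : E, ∀ z : E,
      g (Y x) + ((1 / (2 * γ) *
        ‖Y x - (x - γ • gradient (fun w => f w + h w) x)‖ ^ 2 : ℝ) : EReal) ≤
      g z + ((1 / (2 * γ) *
        ‖z - (x - γ • gradient (fun w => f w + h w) x)‖ ^ 2 : ℝ) : EReal))
    (hYuniq : ∀ x y' : E, (∀ z : E,
      g y' + ((1 / (2 * γ) *
        ‖y' - (x - γ • gradient (fun w => f w + h w) x)‖ ^ 2 : ℝ) : EReal) ≤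
      g z + ((1 / (2 * γ) *
        ‖z - (x - γ • gradient (fun w => f w + h w) x)‖ ^ 2 : ℝ) : EReal)) → y' = Y x) :
    (∀ x : E, dyEnv f h g γ x ≠ ⊤ ∧ dyEnv f h g γ x ≠ ⊥) ∧
      ContDiff ℝ 1 (fun x : E => (dyEnv f h g γ x).toReal) ∧
      ∀ x : E, gradient (fun x : E => (dyEnv f h g γ x).toReal) x =
        (1 / γ) • (x - Y x) -
          fderiv ℝ (gradient (fun w => f w + h w)) x (x - Y x) :=
  dyEnv_differentiable_with_gradient_general f h g ρ hfC2 hhC2 hgtop hgbot hwc γ hγ0 hγρ Y hY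
end
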